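/- In the marked setup below, let λ ∈ ℤ^{P*} be a nonnegative dominant marking with decomposition coefficients α_K(λ) (K ∈ 𝒥*), and let S = Σ_{K∈𝒥*} α_K(λ). Then the marked relative poset polytope R_λ(P,<,<') = Σ_{K∈𝒥*} α_K(λ)·R_{ω_K}(P,<,<') (Minkowski sum) equals the intersection of S·R(P,<,<') with the affine subspace {x ∈ ℝ^P : x_p = λ_p for all p ∈ P*}. -/

import Mathlib

/-!
The inclusion `⊆` is coordinatewise: each `R_{ω_K}` lies in `R`, and its points have
`P*`-coordinates `1_K`. For `⊇`, write a point of `S·R` as a nonnegative combination of vertices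
`1_{max J}` of total mass `S`. Since
`1_{max J₁} + 1_{max J₂} = 1_{max (J₁ ∪ J₂)} + 1_{max (J₁ *' J₂)}`, a combination maximising
`∑ t_J 2^|J|` is supported on a chain of ideals. Grouping the ideals by their trace `J ∩ P*` gives
a chain decomposition of `λ` of total mass `S`; such decompositions are unique, so the group of
trace `K` has mass `α_K` and is `α_K` times a point of `R_{ω_K}`.
-/

open Pointwise

/-- `J` is an order ideal (lower set) with respect to the strict order relation `r`. -/
def IsLowerIdeal {P : Type*} (r : P → P → Prop) (J : Set P) : Prop :=
  ∀ ⦃p q : P⦄, r p q → q ∈ J → p ∈ J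

/-- The set of `r`-maximal elements of `J`. -/
def maxElems {P : Type*} (r : P → P → Prop) (J : Set P) : Set P :=
  {p ∈ J | ∀ q ∈ J, ¬ r p q}

/-- The 0/1 indicator vector of `A ⊆ P`, as a point of `ℝ^P`. -/
noncomputable def ind {P : Type*} (A : Set P) : P → ℝ :=
  A.indicator 1

/-- The order ideal of `(P, r)` generated by `A`. -/
def genIdeal {P : Type*} (r : P → P → Prop) (A : Set P) : Set P :=
  {p | ∃ q ∈ A, p = q ∨ r p q}

/-- The Hibi–Li operation `J1 *' J2` relative to the order `r`: the order ideal of `(P, r)`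
generated by `(J1 ∩ J2) ∩ (max_r J1 ∪ max_r J2)`. -/
def starOp {P : Type*} (r : P → P → Prop) (J1 J2 : Set P) : Set P :=
  genIdeal r ((J1 ∩ J2) ∩ (maxElems r J1 ∪ maxElems r J2))

/-- The relative poset polytope `R(P, lt, lt')`: the convex hull of the points
`1_{max_{lt'} J}` over all order ideals `J` of `(P, lt)`. -/
noncomputable def RPP {P : Type*} (lt lt' : P → P → Prop) : Set (P → ℝ) :=
  convexHull ℝ {x | ∃ J : Set P, IsLowerIdeal lt J ∧ x = ind (maxElems lt' J)}

/-- The dilation `m·Q = {m·x : x ∈ Q}`. -/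
def dilate {P : Type*} (m : ℕ) (Q : Set (P → ℝ)) : Set (P → ℝ) :=
  (fun x => (m : ℝ) • x) '' Q

/-- The order polytope of `(P, lt)`. -/
def orderPolytope {P : Type*} (lt : P → P → Prop) : Set (P → ℝ) :=
  {x | (∀ p, 0 ≤ x p ∧ x p ≤ 1) ∧ ∀ p q, lt q p → x p ≤ x q}

/-- The chain polytope of `(P, lt)`. -/
def chainPolytope {P : Type*} (lt : P → P → Prop) : Set (P → ℝ) :=
  {x | (∀ p, 0 ≤ x p) ∧ ∀ (k : ℕ) (c : Fin k → P),
    (∀ i j : Fin k, i < j → lt (c i) (c j)) → (∑ i, x (c i)) ≤ 1}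


/-- The fundamental marked relative poset polytope `R_{ω_K}(P, lt, lt')`: the convex hull
of the points `1_{max_{lt'} J}` over order ideals `J` of `(P, lt)` with `J ∩ P* = K`. -/
noncomputable def RPPfund {P : Type*} (lt lt' : P → P → Prop) (Pstar K : Set P) :
    Set (P → ℝ) :=
  convexHull ℝ
    {x | ∃ J : Set P, IsLowerIdeal lt J ∧ J ∩ Pstar = K ∧ x = ind (maxElems lt' J)}

/-- The set `𝒥*` of order ideals of the subposet `(P*, lt)`. -/
def idealsOn {P : Type*} (lt : P → P → Prop) (Pstar : Set P) : Set (Set P) :=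
  {K | K ⊆ Pstar ∧ ∀ p q : P, p ∈ Pstar → q ∈ Pstar → lt p q → q ∈ K → p ∈ K}

/-- The marked relative poset polytope for a coefficient function `α : 𝒥* → ℕ`:
the Minkowski sum `Σ_{K ∈ 𝒥*} α_K · R_{ω_K}(P, lt, lt')`. -/
noncomputable def RPPmarked {P : Type*} [Fintype P] (lt lt' : P → P → Prop)
    (Pstar : Set P) (α : Set P → ℕ) : Set (P → ℝ) :=
  ∑ K ∈ (Set.toFinite (idealsOn lt Pstar)).toFinset, dilate (α K) (RPPfund lt lt' Pstar K)

section Uncrossing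

variable {ι E : Type*} [Fintype ι] [AddCommGroup E] [Module ℝ E]

lemma exists_weights_of_mem_convexHull_range {v : ι → E} {y : E}
    (hy : y ∈ convexHull ℝ (Set.range v)) :
    ∃ w : ι → ℝ, 0 ≤ w ∧ ∑ i, w i = 1 ∧ ∑ i, w i • v i = y := by
  classical
  rw [convexHull_range_eq_exists_affineCombination] at hy
  obtain ⟨s, w, hw₀, hw₁, rfl⟩ := hy
  refine ⟨fun i => if i ∈ s then w i else 0, fun i => ?_, ?_, ?_⟩
  · dsimp only
    split_ifs with hi
    exacts [hw₀ i hi, le_rfl]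
  · rw [Fintype.sum_extend_by_zero, hw₁]
  · simp only [ite_smul, zero_smul, Fintype.sum_extend_by_zero,
      s.affineCombination_eq_linear_combination v w hw₁]

def nonnegReps (v : ι → E) (S : ℝ) (x : E) : Set (ι → ℝ) :=
  {t | 0 ≤ t ∧ ∑ i, t i = S ∧ ∑ i, t i • v i = x}

lemma isCompact_nonnegReps [TopologicalSpace E] [T2Space E] [ContinuousAdd E]
    [ContinuousSMul ℝ E] (v : ι → E) (S : ℝ) (x : E) : IsCompact (nonnegReps v S x) := by
  have hsub : nonnegReps v S x ⊆ Set.Icc 0 (fun _ => S) := fun t ht =>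
    ⟨ht.1, fun i => ht.2.1 ▸ Finset.single_le_sum (fun j _ => ht.1 j) (Finset.mem_univ i)⟩
  refine isCompact_Icc.of_isClosed_subset ?_ hsub
  exact (isClosed_le continuous_const continuous_id).inter
    ((isClosed_eq (by fun_prop) continuous_const).inter
      (isClosed_eq (by fun_prop) continuous_const))

lemma sum_add_smul_single_smul [DecidableEq ι] {M : Type*} [AddCommGroup M] [Module ℝ M]
    (t : ι → ℝ) (m : ℝ) (a b c d : ι) (f : ι → M) :
    ∑ i, (t + m • (Pi.single a 1 + Pi.single b 1 - Pi.single c 1 - Pi.single d 1 : ι → ℝ)) i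
        • f i = ∑ i, t i • f i + m • (f a + f b - f c - f d) := by
  simp [add_smul, sub_smul, Finset.sum_add_distrib, Finset.sum_sub_distrib, mul_smul,
    ← Finset.smul_sum, Pi.single_apply, ite_smul]

lemma two_pow_ncard_add_two_pow_ncard_lt {α : Type*} [Finite α] {A B : Set α}
    (hAB : ¬ A ⊆ B) (hBA : ¬ B ⊆ A) (C : Set α) :
    (2 : ℝ) ^ A.ncard + 2 ^ B.ncard < 2 ^ (A ∪ B).ncard + 2 ^ C.ncard := by
  have hA : A.ncard < (A ∪ B).ncard :=
    Set.ncard_lt_ncard (Set.ssubset_union_left_iff.2 hBA) (Set.toFinite _)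
  have hB : B.ncard < (A ∪ B).ncard :=
    Set.ncard_lt_ncard (Set.ssubset_union_right_iff.2 hAB) (Set.toFinite _)
  have hA' : (2 : ℝ) ^ A.ncard * 2 ≤ 2 ^ (A ∪ B).ncard := by
    rw [← pow_succ]; exact pow_le_pow_right₀ one_le_two hA
  have hB' : (2 : ℝ) ^ B.ncard * 2 ≤ 2 ^ (A ∪ B).ncard := by
    rw [← pow_succ]; exact pow_le_pow_right₀ one_le_two hB
  have hC : (0 : ℝ) < 2 ^ C.ncard := by positivity
  linarith

theorem exists_chain_mem_nonnegReps [TopologicalSpace E] [T2Space E] [ContinuousAdd E]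
    [ContinuousSMul ℝ E] {α : Type*} [Finite α] (J : ι → Set α) (u o : ι → ι → ι)
    (hu : ∀ i j, J (u i j) = J i ∪ J j) {v : ι → E}
    (hv : ∀ i j, v i + v j = v (u i j) + v (o i j)) {S : ℝ} {x : E}
    (hx : (nonnegReps v S x).Nonempty) :
    ∃ t ∈ nonnegReps v S x, ∀ i j, t i ≠ 0 → t j ≠ 0 → J i ⊆ J j ∨ J j ⊆ J i := by
  classical
  -- uncrossing two incomparable `J i`, `J j` would increase `∑ t i 2^|J i|` at a maximiser
  obtain ⟨t, ht, hmax⟩ := (isCompact_nonnegReps v S x).exists_isMaxOn hx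
    (f := fun t => ∑ i, t i • (2 : ℝ) ^ (J i).ncard) (by fun_prop)
  refine ⟨t, ht, fun i j hi hj => ?_⟩
  by_contra! hij
  obtain ⟨ht₀, htS, htx⟩ := ht
  have hne : i ≠ j := by rintro rfl; exact hij.1 subset_rfl
  set m := min (t i) (t j)
  have hm : 0 < m := lt_min (lt_of_le_of_ne (ht₀ i) (Ne.symm hi))
    (lt_of_le_of_ne (ht₀ j) (Ne.symm hj))
  set t' := t + m • (Pi.single (u i j) 1 + Pi.single (o i j) 1 - Pi.single i 1 -
    Pi.single j 1 : ι → ℝ)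
  have hvec : ∑ k, t' k • v k = ∑ k, t k • v k + m • (v (u i j) + v (o i j) - v i - v j) :=
    sum_add_smul_single_smul t m _ _ _ _ v
  have hreal (f : ι → ℝ) :
      ∑ k, t' k * f k = ∑ k, t k * f k + m * (f (u i j) + f (o i j) - f i - f j) :=
    sum_add_smul_single_smul t m _ _ _ _ f
  have ht' : t' ∈ nonnegReps v S x := by
    refine ⟨fun k => ?_, ?_, ?_⟩
    · have hmi : m ≤ t i := min_le_left _ _
      have hmj : m ≤ t j := min_le_right _ _
      have htk : 0 ≤ t k := ht₀ k
      simp only [t', Pi.add_apply, Pi.smul_apply, Pi.sub_apply, Pi.single_apply, smul_eq_mul,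
        Pi.zero_apply]
      split_ifs <;> subst_vars <;> first | exact absurd rfl hne | nlinarith
    · simpa [htS] using hreal 1
    · rw [hvec, htx, ← hv, add_sub_cancel_left, sub_self, smul_zero, add_zero]
  have hlt := two_pow_ncard_add_two_pow_ncard_lt hij.1 hij.2 (J (o i j))
  rw [← hu] at hlt
  have hle := isMaxOn_iff.1 hmax t' ht'
  simp only [smul_eq_mul, hreal] at hle
  nlinarith

end Uncrossing

section ChainDecomposition

variable {α : Type*} {Q : Set α} {s : Finset (Set α)} {c d : Set α → ℝ}

open Classical in
/-- For a chain-supported combination `f = ∑ c L • 1_L`, the mass of the sets not contained in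
`K` is attained by `f` at any point of the smallest such set outside `K`. -/
lemma isGreatest_sum_filter_not_subset (hsQ : ∀ L ∈ s, L ⊆ Q) (hc : ∀ L ∈ s, 0 ≤ c L)
    (hchain : IsChain (· ⊆ ·) {L | L ∈ s ∧ c L ≠ 0}) (K : Set α) :
    IsGreatest (insert 0 ((fun p => ∑ L ∈ s, c L * L.indicator 1 p) '' (Q \ K)))
      (∑ L ∈ s with ¬ L ⊆ K, c L) := by
  rw [Finset.sum_filter]
  refine ⟨?_, ?_⟩
  · by_cases hF : (s.filter fun L => c L ≠ 0 ∧ ¬ L ⊆ K).Nonempty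
    · obtain ⟨M, hM⟩ := Finset.exists_minimal hF
      obtain ⟨hMs, hM0, hMK⟩ := Finset.mem_filter.1 hM.prop
      obtain ⟨p, hpM, hpK⟩ := Set.not_subset.1 hMK
      refine Or.inr ⟨p, ⟨hsQ M hMs hpM, hpK⟩, Finset.sum_congr rfl fun L hL => ?_⟩
      by_cases hL0 : c L = 0
      · simp [hL0]
      by_cases hLK : L ⊆ K
      · have hpL : p ∉ L := fun h => hpK (hLK h)
        simp [hLK, hpL]
      · have hML : M ⊆ L := (hchain.total ⟨hL, hL0⟩ ⟨hMs, hM0⟩).elim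
          (fun h => hM.2 (Finset.mem_filter.2 ⟨hL, hL0, hLK⟩) h) id
        simp [hLK, hML hpM]
    · refine Or.inl (Finset.sum_eq_zero fun L hL => ?_)
      by_cases hLK : L ⊆ K
      · simp [hLK]
      · by_contra h
        exact hF ⟨L, Finset.mem_filter.2 ⟨hL, by simpa [hLK] using h, hLK⟩⟩
  · rintro _ (rfl | ⟨q, ⟨-, hqK⟩, rfl⟩)
    · exact Finset.sum_nonneg fun L hL => by split_ifs <;> simp [hc L hL]
    · refine Finset.sum_le_sum fun L hL => ?_
      by_cases hLK : L ⊆ K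
      · have hqL : q ∉ L := fun h => hqK (hLK h)
        simp [hLK, hqL]
      · by_cases hq : q ∈ L <;> simp [hLK, hq, hc L hL]

theorem eq_of_isChain_of_sum_indicator_eq (hsQ : ∀ L ∈ s, L ⊆ Q) (hc : ∀ L ∈ s, 0 ≤ c L)
    (hd : ∀ L ∈ s, 0 ≤ d L) (hcc : IsChain (· ⊆ ·) {L | L ∈ s ∧ c L ≠ 0})
    (hdc : IsChain (· ⊆ ·) {L | L ∈ s ∧ d L ≠ 0}) (hsum : ∑ L ∈ s, c L = ∑ L ∈ s, d L)
    (hQ : ∀ p ∈ Q, ∑ L ∈ s, c L * L.indicator 1 p = ∑ L ∈ s, d L * L.indicator 1 p) :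
    ∀ K ∈ s, c K = d K := by
  classical
  have hlower (K : Set α) : ∑ L ∈ s with L ⊆ K, c L = ∑ L ∈ s with L ⊆ K, d L := by
    have himage : (fun p => ∑ L ∈ s, c L * L.indicator 1 p) '' (Q \ K) =
        (fun p => ∑ L ∈ s, d L * L.indicator 1 p) '' (Q \ K) :=
      Set.image_congr fun p hp => hQ p hp.1
    have hupper := (isGreatest_sum_filter_not_subset hsQ hc hcc K).unique
      (himage ▸ isGreatest_sum_filter_not_subset hsQ hd hdc K)
    have hc' := Finset.sum_filter_add_sum_filter_not s (· ⊆ K) c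
    have hd' := Finset.sum_filter_add_sum_filter_not s (· ⊆ K) d
    linarith
  intro K hK
  refine (s.finite_toSet.wellFoundedOn (r := (· ⊂ ·))).induction (P := fun K => c K = d K) hK
    fun K hK ih => ?_
  have hsplit (e : Set α → ℝ) : ∑ L ∈ s with L ⊆ K, e L = e K + ∑ L ∈ s with L ⊂ K, e L := by
    rw [← Finset.sum_insert (by simp)]
    congr 1
    ext L
    simp only [Finset.mem_filter, Finset.mem_insert]
    constructor
    · rintro ⟨hL, hLK⟩
      rcases hLK.eq_or_ssubset with rfl | h
      exacts [Or.inl rfl, Or.inr ⟨hL, h⟩]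
    · rintro (rfl | ⟨hL, h⟩)
      exacts [⟨hK, subset_rfl⟩, ⟨hL, h.subset⟩]
  have := hlower K
  rw [hsplit c, hsplit d, Finset.sum_congr rfl fun L hL =>
    ih L (Finset.mem_filter.1 hL).1 (Finset.mem_filter.1 hL).2] at this
  linarith

end ChainDecomposition

section MaxElems

variable {P : Type*} {r : P → P → Prop} {J₁ J₂ : Set P}

lemma IsLowerIdeal.union (h₁ : IsLowerIdeal r J₁) (h₂ : IsLowerIdeal r J₂) :
    IsLowerIdeal r (J₁ ∪ J₂) := fun _ _ hpq hq => hq.imp (h₁ hpq) (h₂ hpq)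

lemma IsLowerIdeal.mono {r' : P → P → Prop} (hrr' : ∀ p q, r' p q → r p q) {J : Set P}
    (hJ : IsLowerIdeal r J) : IsLowerIdeal r' J := fun _ _ hpq hq => hJ (hrr' _ _ hpq) hq

lemma genIdeal_isLowerIdeal (htr : ∀ a b c, r a b → r b c → r a c) (A : Set P) :
    IsLowerIdeal r (genIdeal r A) := by
  rintro p q hpq ⟨a, ha, rfl | hqa⟩
  exacts [⟨q, ha, Or.inr hpq⟩, ⟨a, ha, Or.inr (htr _ _ _ hpq hqa)⟩]

lemma maxElems_starOp (htr : ∀ a b c, r a b → r b c → r a c) :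
    maxElems r (starOp r J₁ J₂) = J₁ ∩ J₂ ∩ (maxElems r J₁ ∪ maxElems r J₂) := by
  ext p
  constructor
  · rintro ⟨⟨g, hg, rfl | hpg⟩, hmax⟩
    exacts [hg, absurd hpg (hmax g ⟨g, hg, Or.inl rfl⟩)]
  · intro hp
    refine ⟨⟨p, hp, Or.inl rfl⟩, ?_⟩
    rintro q ⟨g, ⟨⟨hg₁, hg₂⟩, -⟩, hqg⟩ hpq
    have hpg : r p g := hqg.elim (fun h => h ▸ hpq) (htr _ _ _ hpq)
    exact hp.2.elim (fun hm => hm.2 g hg₁ hpg) (fun hm => hm.2 g hg₂ hpg)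

lemma maxElems_union_union_maxElems_starOp (htr : ∀ a b c, r a b → r b c → r a c)
    (h₁ : IsLowerIdeal r J₁) (h₂ : IsLowerIdeal r J₂) :
    maxElems r (J₁ ∪ J₂) ∪ maxElems r (starOp r J₁ J₂) = maxElems r J₁ ∪ maxElems r J₂ := by
  rw [maxElems_starOp htr]
  ext p
  constructor
  · rintro (⟨hp₁ | hp₂, hmax⟩ | ⟨-, hm⟩)
    · exact Or.inl ⟨hp₁, fun q hq => hmax q (Or.inl hq)⟩
    · exact Or.inr ⟨hp₂, fun q hq => hmax q (Or.inr hq)⟩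
    · exact hm
  · rintro (hm | hm)
    · by_cases hp₂ : p ∈ J₂
      · exact Or.inr ⟨⟨hm.1, hp₂⟩, Or.inl hm⟩
      · refine Or.inl ⟨Or.inl hm.1, fun q hq hpq => hq.elim (fun hq₁ => hm.2 q hq₁ hpq)
          fun hq₂ => hp₂ (h₂ hpq hq₂)⟩
    · by_cases hp₁ : p ∈ J₁
      · exact Or.inr ⟨⟨hp₁, hm.1⟩, Or.inr hm⟩
      · refine Or.inl ⟨Or.inr hm.1, fun q hq hpq => hq.elim (fun hq₁ => hp₁ (h₁ hpq hq₁))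
          fun hq₂ => hm.2 q hq₂ hpq⟩

lemma maxElems_union_inter_maxElems_starOp (htr : ∀ a b c, r a b → r b c → r a c) :
    maxElems r (J₁ ∪ J₂) ∩ maxElems r (starOp r J₁ J₂) = maxElems r J₁ ∩ maxElems r J₂ := by
  rw [maxElems_starOp htr]
  ext p
  constructor
  · rintro ⟨⟨-, hmax⟩, ⟨hp₁, hp₂⟩, -⟩
    exact ⟨⟨hp₁, fun q hq => hmax q (Or.inl hq)⟩, ⟨hp₂, fun q hq => hmax q (Or.inr hq)⟩⟩
  · rintro ⟨hm₁, hm₂⟩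
    exact ⟨⟨Or.inl hm₁.1, fun q hq => hq.elim (hm₁.2 q) (hm₂.2 q)⟩, ⟨hm₁.1, hm₂.1⟩, Or.inl hm₁⟩

lemma ind_maxElems_add_ind_maxElems (htr : ∀ a b c, r a b → r b c → r a c)
    (h₁ : IsLowerIdeal r J₁) (h₂ : IsLowerIdeal r J₂) :
    ind (maxElems r J₁) + ind (maxElems r J₂) =
      ind (maxElems r (J₁ ∪ J₂)) + ind (maxElems r (starOp r J₁ J₂)) := by
  simp only [ind]
  rw [← Set.indicator_union_add_inter,
    ← Set.indicator_union_add_inter (s := maxElems r (J₁ ∪ J₂)),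
    maxElems_union_union_maxElems_starOp htr h₁ h₂, maxElems_union_inter_maxElems_starOp htr]

end MaxElems

section Polytopes

variable {P : Type*} {lt lt' : P → P → Prop} {Pstar K : Set P}

lemma inter_mem_idealsOn {J : Set P} (hJ : IsLowerIdeal lt J) :
    J ∩ Pstar ∈ idealsOn lt Pstar :=
  ⟨Set.inter_subset_right, fun _ _ hp _ hpq hq => ⟨hJ hpq hq.1, hp⟩⟩

lemma genIdeal_inter_eq (hK : K ∈ idealsOn lt Pstar) : genIdeal lt K ∩ Pstar = K := by
  ext p
  constructor
  · rintro ⟨⟨q, hq, rfl | hpq⟩, hp⟩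
    exacts [hq, hK.2 p q hp (hK.1 hq) hpq hq]
  · exact fun hp => ⟨⟨p, hp, Or.inl rfl⟩, hK.1 hp⟩

lemma RPPfund_nonempty (hlttr : ∀ a b c, lt a b → lt b c → lt a c)
    (hK : K ∈ idealsOn lt Pstar) : (RPPfund lt lt' Pstar K).Nonempty :=
  ⟨_, subset_convexHull ℝ _
    ⟨genIdeal lt K, genIdeal_isLowerIdeal hlttr K, genIdeal_inter_eq hK, rfl⟩⟩

lemma RPP_nonempty : (RPP lt lt').Nonempty :=
  ⟨_, subset_convexHull ℝ _ ⟨∅, fun _ _ _ h => h, rfl⟩⟩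

lemma RPPfund_subset_RPP : RPPfund lt lt' Pstar K ⊆ RPP lt lt' :=
  convexHull_mono fun _ ⟨J, hJ, _, hx⟩ => ⟨J, hJ, hx⟩

lemma ind_maxElems_apply_of_mem (hiii : ∀ p ∈ Pstar, ∀ q : P, ¬ lt' p q) (J : Set P) {p : P}
    (hp : p ∈ Pstar) : ind (maxElems lt' J) p = J.indicator 1 p := by
  have hmax : p ∈ maxElems lt' J ↔ p ∈ J := ⟨And.left, fun h => ⟨h, fun q _ => hiii p hp q⟩⟩
  unfold ind
  by_cases hpJ : p ∈ J
  · rw [Set.indicator_of_mem (hmax.2 hpJ), Set.indicator_of_mem hpJ]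
  · rw [Set.indicator_of_notMem (mt hmax.1 hpJ), Set.indicator_of_notMem hpJ]

lemma apply_eq_indicator_of_mem_RPPfund (hiii : ∀ p ∈ Pstar, ∀ q : P, ¬ lt' p q) {x : P → ℝ}
    (hx : x ∈ RPPfund lt lt' Pstar K) {p : P} (hp : p ∈ Pstar) : x p = K.indicator 1 p := by
  refine convexHull_min ?_ (convex_hyperplane (LinearMap.proj (R := ℝ) p).isLinear _) hx
  rintro _ ⟨J, -, rfl, rfl⟩
  change ind (maxElems lt' J) p = _
  rw [ind_maxElems_apply_of_mem hiii J hp, Set.inter_indicator_one, Pi.mul_apply,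
    Set.indicator_of_mem hp, Pi.one_apply, mul_one]

lemma sum_smul_mem_dilate {ι : Type*} {Q : Set (P → ℝ)} (hQ : Convex ℝ Q) (hQne : Q.Nonempty)
    {s : Finset ι} {w : ι → ℝ} {z : ι → P → ℝ} {m : ℕ} (hw₀ : ∀ i ∈ s, 0 ≤ w i)
    (hw : ∑ i ∈ s, w i = m) (hz : ∀ i ∈ s, z i ∈ Q) : ∑ i ∈ s, w i • z i ∈ dilate m Q := by
  rcases m.eq_zero_or_pos with rfl | hm
  · have hzero := (Finset.sum_eq_zero_iff_of_nonneg hw₀).1 (by simpa using hw)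
    obtain ⟨q, hq⟩ := hQne
    refine ⟨q, hq, ?_⟩
    rw [Finset.sum_eq_zero fun i hi => by rw [hzero i hi, zero_smul]]
    simp
  · refine ⟨s.centerMass w z, hQ.centerMass_mem hw₀ (by rw [hw]; positivity) hz, ?_⟩
    simp only [Finset.centerMass, hw, smul_smul]
    rw [mul_inv_cancel₀ (by positivity), one_smul]

end Polytopes

section MarkedPolytope

variable {P : Type*} [Fintype P] {lt lt' : P → P → Prop} {Pstar : Set P} {lam : P → ℤ}
  {α : Set P → ℕ}

lemma RPPmarked_subset (hiii : ∀ p ∈ Pstar, ∀ q : P, ¬ lt' p q)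
    (hαsum : ∀ p ∈ Pstar, lam p =
      ∑ K ∈ (Set.toFinite (idealsOn lt Pstar)).toFinset, (α K : ℤ) * K.indicator 1 p) :
    RPPmarked lt lt' Pstar α ⊆
      dilate (∑ K ∈ (Set.toFinite (idealsOn lt Pstar)).toFinset, α K) (RPP lt lt') ∩
        {x | ∀ p ∈ Pstar, x p = (lam p : ℝ)} := by
  intro x hx
  obtain ⟨y, hy, rfl⟩ := (Set.mem_finsetSum _ _ _).1 hx
  choose! z hz hzy using fun K (hK : K ∈ (Set.toFinite (idealsOn lt Pstar)).toFinset) => hy hK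
  rw [Finset.sum_congr rfl fun K hK => (hzy K hK).symm]
  refine ⟨sum_smul_mem_dilate (convex_convexHull ℝ _) RPP_nonempty
    (fun K _ => Nat.cast_nonneg _) (by push_cast; rfl)
    fun K hK => RPPfund_subset_RPP (hz K hK), fun p hp => ?_⟩
  simp only [Finset.sum_apply, Pi.smul_apply, smul_eq_mul, hαsum p hp]
  push_cast
  refine Finset.sum_congr rfl fun K hK => ?_
  rw [apply_eq_indicator_of_mem_RPPfund hiii (hz K hK) hp]
  by_cases hpK : p ∈ K <;> simp [hpK]

open Classical in
lemma sum_fiber_inter_eq_of_isChain {ι : Type*} [Fintype ι] {J : ι → Set P}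
    (hJ : ∀ i, IsLowerIdeal lt (J i)) {t : ι → ℝ} (ht₀ : 0 ≤ t)
    (htchain : ∀ i j, t i ≠ 0 → t j ≠ 0 → J i ⊆ J j ∨ J j ⊆ J i)
    (hαchain : ∀ K1 K2 : Set P, α K1 ≠ 0 → α K2 ≠ 0 → K1 ⊆ K2 ∨ K2 ⊆ K1)
    (hαsum : ∀ p ∈ Pstar, lam p =
      ∑ K ∈ (Set.toFinite (idealsOn lt Pstar)).toFinset, (α K : ℤ) * K.indicator 1 p)
    (htS : ∑ i, t i = ∑ K ∈ (Set.toFinite (idealsOn lt Pstar)).toFinset, (α K : ℝ))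
    (htlam : ∀ p ∈ Pstar, ∑ i, t i * (J i).indicator 1 p = lam p) :
    ∀ K ∈ (Set.toFinite (idealsOn lt Pstar)).toFinset,
      ∑ i with J i ∩ Pstar = K, t i = α K := by
  have hmaps : ∀ i ∈ Finset.univ, J i ∩ Pstar ∈ (Set.toFinite (idealsOn lt Pstar)).toFinset :=
    fun i _ => (Set.Finite.mem_toFinset _).2 (inter_mem_idealsOn (hJ i))
  refine eq_of_isChain_of_sum_indicator_eq (fun K hK => ((Set.Finite.mem_toFinset _).1 hK).1)
    (fun K _ => Finset.sum_nonneg fun i _ => ht₀ i) (fun K _ => Nat.cast_nonneg _) ?_ ?_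
    (by rw [Finset.sum_fiberwise_of_maps_to hmaps, htS]) fun p hp => ?_
  · rintro K₁ ⟨-, h₁⟩ K₂ ⟨-, h₂⟩ -
    obtain ⟨i, hi, hti⟩ := Finset.exists_ne_zero_of_sum_ne_zero h₁
    obtain ⟨j, hj, htj⟩ := Finset.exists_ne_zero_of_sum_ne_zero h₂
    rw [← (Finset.mem_filter.1 hi).2, ← (Finset.mem_filter.1 hj).2]
    exact (htchain i j hti htj).imp (Set.inter_subset_inter_left _) (Set.inter_subset_inter_left _)
  · rintro K₁ ⟨-, h₁⟩ K₂ ⟨-, h₂⟩ -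
    exact hαchain K₁ K₂ (by exact_mod_cast h₁) (by exact_mod_cast h₂)
  · have hfiber : ∀ K ∈ (Set.toFinite (idealsOn lt Pstar)).toFinset,
        (∑ i with J i ∩ Pstar = K, t i) * K.indicator 1 p =
          ∑ i with J i ∩ Pstar = K, t i * (J i).indicator 1 p := by
      intro K _
      rw [Finset.sum_mul]
      refine Finset.sum_congr rfl fun i hi => ?_
      rw [← (Finset.mem_filter.1 hi).2, Set.inter_indicator_one, Pi.mul_apply,
        Set.indicator_of_mem hp, Pi.one_apply, mul_one]
    rw [Finset.sum_congr rfl hfiber, Finset.sum_fiberwise_of_maps_to hmaps, htlam p hp, hαsum p hp]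
    push_cast
    refine Finset.sum_congr rfl fun K _ => ?_
    by_cases hpK : p ∈ K <;> simp [hpK]

lemma inter_subset_RPPmarked (hlttr : ∀ a b c, lt a b → lt b c → lt a c)
    (hlt'tr : ∀ a b c, lt' a b → lt' b c → lt' a c) (hweak : ∀ p q, lt' p q → lt p q)
    (hstar : ∀ J1 J2 : Set P, IsLowerIdeal lt J1 → IsLowerIdeal lt J2 →
      IsLowerIdeal lt (starOp lt' J1 J2))
    (hiii : ∀ p ∈ Pstar, ∀ q : P, ¬ lt' p q)
    (hαchain : ∀ K1 K2 : Set P, α K1 ≠ 0 → α K2 ≠ 0 → K1 ⊆ K2 ∨ K2 ⊆ K1)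
    (hαsum : ∀ p ∈ Pstar, lam p =
      ∑ K ∈ (Set.toFinite (idealsOn lt Pstar)).toFinset, (α K : ℤ) * K.indicator 1 p) :
    dilate (∑ K ∈ (Set.toFinite (idealsOn lt Pstar)).toFinset, α K) (RPP lt lt') ∩
        {x | ∀ p ∈ Pstar, x p = (lam p : ℝ)} ⊆ RPPmarked lt lt' Pstar α := by
  classical
  set S := ∑ K ∈ (Set.toFinite (idealsOn lt Pstar)).toFinset, α K
  rintro x ⟨⟨y, hy, hyx : (S : ℝ) • y = x⟩, hxlam⟩
  let v : {J : Set P // IsLowerIdeal lt J} → P → ℝ := fun J => ind (maxElems lt' J.1)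
  have hvert : {x | ∃ J, IsLowerIdeal lt J ∧ x = ind (maxElems lt' J)} = Set.range v := by
    ext x
    exact ⟨fun ⟨J, hJ, hx⟩ => ⟨⟨J, hJ⟩, hx.symm⟩, fun ⟨J, hx⟩ => ⟨J.1, J.2, hx.symm⟩⟩
  rw [RPP, hvert] at hy
  obtain ⟨w, hw₀, hw₁, rfl⟩ := exists_weights_of_mem_convexHull_range hy
  subst hyx
  have hv (i j : {J : Set P // IsLowerIdeal lt J}) : v i + v j =
      v ⟨i.1 ∪ j.1, i.2.union j.2⟩ + v ⟨starOp lt' i.1 j.1, hstar _ _ i.2 j.2⟩ :=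
    ind_maxElems_add_ind_maxElems hlt'tr (i.2.mono hweak) (j.2.mono hweak)
  obtain ⟨t, ⟨ht₀, htS, htx⟩, htchain⟩ :=
    exists_chain_mem_nonnegReps (S := S) (x := (S : ℝ) • ∑ i, w i • v i) Subtype.val _ _
      (fun _ _ => rfl) hv
      ⟨(S : ℝ) • w, fun i => mul_nonneg (Nat.cast_nonneg S) (hw₀ i),
        by simp [← Finset.mul_sum, hw₁], by simp [mul_smul, ← Finset.smul_sum]⟩
  have hfiber := sum_fiber_inter_eq_of_isChain (fun i => i.2) ht₀ htchain hαchain hαsum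
    (by rw [htS, Nat.cast_sum]) fun p hp => by
      rw [← hxlam p hp, ← htx, Finset.sum_apply]
      simp [v, ind_maxElems_apply_of_mem hiii _ hp]
  refine (Set.mem_finsetSum _ _ _).2
    ⟨fun K => ∑ i with i.1 ∩ Pstar = K, t i • v i, fun hK => ?_, ?_⟩
  · exact sum_smul_mem_dilate (convex_convexHull ℝ _)
      (RPPfund_nonempty hlttr ((Set.Finite.mem_toFinset _).1 hK)) (fun i _ => ht₀ i)
      (hfiber _ hK) fun i hi => subset_convexHull ℝ _ ⟨i.1, i.2, (Finset.mem_filter.1 hi).2, rfl⟩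
  · rw [Finset.sum_fiberwise_of_maps_to
      fun i _ => (Set.Finite.mem_toFinset _).2 (inter_mem_idealsOn i.2), htx]

end MarkedPolytope

theorem stmt13_general {P : Type*} [Fintype P] (lt lt' : P → P → Prop)
    (hlttr : ∀ a b c, lt a b → lt b c → lt a c)
    (hlt'tr : ∀ a b c, lt' a b → lt' b c → lt' a c)
    (hweak : ∀ p q, lt' p q → lt p q)
    (hstar : ∀ J1 J2 : Set P, IsLowerIdeal lt J1 → IsLowerIdeal lt J2 →
      IsLowerIdeal lt (starOp lt' J1 J2))
    (Pstar : Set P)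
    (hiii : ∀ p ∈ Pstar, ∀ q : P, ¬ lt' p q)
    (lam : P → ℤ) (α : Set P → ℕ)
    (hαchain : ∀ K1 K2 : Set P, α K1 ≠ 0 → α K2 ≠ 0 → K1 ⊆ K2 ∨ K2 ⊆ K1)
    (hαsum : ∀ p ∈ Pstar, lam p =
      ∑ K ∈ (Set.toFinite (idealsOn lt Pstar)).toFinset, (α K : ℤ) * K.indicator 1 p) :
    RPPmarked lt lt' Pstar α =
      dilate (∑ K ∈ (Set.toFinite (idealsOn lt Pstar)).toFinset, α K) (RPP lt lt') ∩
        {x | ∀ p ∈ Pstar, x p = (lam p : ℝ)} :=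
  (RPPmarked_subset hiii hαsum).antisymm
    (inter_subset_RPPmarked hlttr hlt'tr hweak hstar hiii hαchain hαsum)

/-- For a nonnegative dominant marking `λ` with decomposition coefficients `α`, the marked
relative poset polytope `R_λ(P, lt, lt') = Σ_{K ∈ 𝒥*} α_K · R_{ω_K}(P, lt, lt')` equals the
intersection of `S · R(P, lt, lt')`, `S = Σ_K α_K`, with the affine subspace
`{x : x_p = λ_p for all p ∈ P*}`. -/
theorem stmt13 {P : Type*} [Fintype P] (lt lt' : P → P → Prop)
    (hltirr : ∀ p, ¬ lt p p) (hlttr : ∀ a b c, lt a b → lt b c → lt a c)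
    (hlt'irr : ∀ p, ¬ lt' p p) (hlt'tr : ∀ a b c, lt' a b → lt' b c → lt' a c)
    (hweak : ∀ p q, lt' p q → lt p q)
    (hstar : ∀ J1 J2 : Set P, IsLowerIdeal lt J1 → IsLowerIdeal lt J2 →
      IsLowerIdeal lt (starOp lt' J1 J2))
    (Pstar : Set P)
    (hmin : ∀ p : P, (∀ q, ¬ lt q p) → p ∈ Pstar)
    (hmax : ∀ p : P, (∀ q, ¬ lt p q) → p ∈ Pstar)
    (hiii : ∀ p ∈ Pstar, ∀ q : P, ¬ lt' p q)
    (lam : P → ℤ) (α : Set P → ℕ)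
    (hlamnn : ∀ p ∈ Pstar, 0 ≤ lam p)
    (hdom : ∀ p q : P, p ∈ Pstar → q ∈ Pstar → lt p q → lam q ≤ lam p)
    (hαsupp : ∀ K : Set P, α K ≠ 0 → K ∈ idealsOn lt Pstar ∧ K.Nonempty)
    (hαchain : ∀ K1 K2 : Set P, α K1 ≠ 0 → α K2 ≠ 0 → K1 ⊆ K2 ∨ K2 ⊆ K1)
    (hαsum : ∀ p ∈ Pstar, lam p =
      ∑ K ∈ (Set.toFinite (idealsOn lt Pstar)).toFinset, (α K : ℤ) * K.indicator 1 p) :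
    RPPmarked lt lt' Pstar α =
      dilate (∑ K ∈ (Set.toFinite (idealsOn lt Pstar)).toFinset, α K) (RPP lt lt') ∩
        {x | ∀ p ∈ Pstar, x p = (lam p : ℝ)} :=
  stmt13_general lt lt' hlttr hlt'tr hweak hstar Pstar hiii lam α hαchain hαsum
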